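/- For every real x and every t ≠ 0, the Dunkl–Appell polynomials satisfy Σ_{i=2}^∞ (q_i(x)/γ_μ(i)) (i + 2μθ_i)(i − 1 + 2μθ_{i−1}) t^{i−2} = x² Q(t) e_μ(xt) + x Q'(t)(e_μ(xt) − e_μ(−xt)) + e_μ(xt)(Λ_μ² Q)(t) + (e_μ(−xt) − e_μ(xt))(Λ_μ Q)'(t) + x(e_μ(xt) + e_μ(−xt)) Q'(t) + (e_μ(−xt) − e_μ(xt))(Λ_μ Q')(t) + 2(e_μ(xt) − e_μ(−xt)) Q''(t), where θ_i = 0 for even i and θ_i = 1 for odd i, and Λ_μ² denotes the Dunkl operator applied twice. -/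

import Mathlib

open scoped BigOperators

/-- The Dunkl coefficients γ_μ(i). -/
noncomputable def gammaMu (μ : ℝ) (i : ℕ) : ℝ :=
  if Even i then
    2 ^ i * (Nat.factorial (i / 2)) *
      Real.Gamma (((i / 2 : ℕ) : ℝ) + μ + 1 / 2) / Real.Gamma (μ + 1 / 2)
  else
    2 ^ i * (Nat.factorial (i / 2)) *
      Real.Gamma (((i / 2 : ℕ) : ℝ) + μ + 3 / 2) / Real.Gamma (μ + 1 / 2)

/-- θ_i = 0 if i is even, 1 if i is odd. -/
noncomputable def thetaFn (i : ℕ) : ℝ := if Even i then 0 else 1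

/-- The Dunkl exponential e_μ(x) = Σ x^i / γ_μ(i). -/
noncomputable def dunklExp (μ : ℝ) (x : ℝ) : ℝ := ∑' i : ℕ, x ^ i / gammaMu μ i

/-- The Dunkl operator (Λ_μ f)(x) = f'(x) + μ (f(x) - f(-x)) / x. -/
noncomputable def dunklOp (μ : ℝ) (f : ℝ → ℝ) (x : ℝ) : ℝ :=
  deriv f x + μ * (f x - f (-x)) / x

/-- Q(t) = Σ c_i t^i / γ_μ(i). -/
noncomputable def Qf (μ : ℝ) (c : ℕ → ℝ) (t : ℝ) : ℝ := ∑' i : ℕ, c i * t ^ i / gammaMu μ i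

/-- The Dunkl–Appell polynomials q_i(x) = Σ_{j=0}^i (γ_μ(i)/(γ_μ(j)γ_μ(i-j))) c_{i-j} x^j. -/
noncomputable def qPoly (μ : ℝ) (c : ℕ → ℝ) (i : ℕ) (x : ℝ) : ℝ :=
  ∑ j ∈ Finset.range (i + 1),
    gammaMu μ i / (gammaMu μ j * gammaMu μ (i - j)) * c (i - j) * x ^ j

/-- The operators K_n^μ(f;x). -/
noncomputable def Kop (μ : ℝ) (c : ℕ → ℝ) (n : ℕ) (f : ℝ → ℝ) (x : ℝ) : ℝ :=
  1 / (Qf μ c 1 * dunklExp μ (n * x)) *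
    ∑' i : ℕ, qPoly μ c i (n * x) / gammaMu μ i * f (((i : ℝ) + 2 * μ * thetaFn i) / n)

/-!
Put `E(t) = e_μ(xt)` and `F = Q E`. On an entire power series the Dunkl operator shifts
coefficients, `Λ_μ (Σ aᵢ tⁱ) = Σ aᵢ₊₁ (i + 1 + 2μθᵢ₊₁) tⁱ`, and
`γ_μ(i+1) = γ_μ(i) (i + 1 + 2μθᵢ₊₁)`. Since `F(t) = Σ qᵢ(x) tⁱ / γ_μ(i)`, the left-hand side is
`(Λ_μ² F)(t)`, and `Λ_μ E = x E`, i.e. `E'(t) = x E(t) - μ (E(t) - E(-t)) / t`. Expanding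
`Λ_μ²(Q E)` by the Leibniz rule and eliminating `E'` and `E''` with this relation leaves a rational
identity in `Q, Q', Q''` at `±t` and `E(±t)`.
-/

open Finset

theorem hasDerivAt_sub_comp_neg_div {f : ℝ → ℝ} {t : ℝ} (ht : t ≠ 0)
    (hft : DifferentiableAt ℝ f t) (hfnt : DifferentiableAt ℝ f (-t)) :
    HasDerivAt (fun s => (f s - f (-s)) / s)
      (((deriv f t + deriv f (-t)) * t - (f t - f (-t))) / t ^ 2) t :=
  ((hft.hasDerivAt.sub (hfnt.hasDerivAt.comp t (hasDerivAt_neg' t))).div (hasDerivAt_id t)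
    ht).congr_deriv (by simp only [id, Pi.sub_apply, Function.comp_apply]; ring)

theorem dunklOp_congr_of_ne_zero (μ : ℝ) {f g : ℝ → ℝ} (hfg : ∀ s ≠ 0, f s = g s) {t : ℝ}
    (ht : t ≠ 0) : dunklOp μ f t = dunklOp μ g t := by
  have hderiv : deriv f t = deriv g t := Filter.EventuallyEq.deriv_eq <| by
    filter_upwards [compl_singleton_mem_nhds ht] with s hs using hfg s hs
  rw [dunklOp, dunklOp, hderiv, hfg t ht, hfg (-t) (neg_ne_zero.mpr ht)]

theorem hasDerivAt_dunklOp (μ : ℝ) {f : ℝ → ℝ} {t : ℝ} (ht : t ≠ 0) (hf : Differentiable ℝ f)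
    (hf' : DifferentiableAt ℝ (deriv f) t) :
    HasDerivAt (dunklOp μ f)
      (deriv (deriv f) t + μ * ((deriv f t + deriv f (-t)) * t - (f t - f (-t))) / t ^ 2) t := by
  have h : HasDerivAt (fun s => deriv f s + μ * ((f s - f (-s)) / s)) _ t :=
    hf'.hasDerivAt.add ((hasDerivAt_sub_comp_neg_div ht (hf t) (hf (-t))).const_mul μ)
  simp only [← mul_div_assoc] at h
  exact h.congr_deriv (by ring)

theorem dunklOp_dunklOp_mul_of_dunklOp_eq (μ : ℝ) {Q E : ℝ → ℝ} {x t : ℝ} (ht : t ≠ 0)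
    (hQ : Differentiable ℝ Q) (hQ' : Differentiable ℝ (deriv Q))
    (hE : Differentiable ℝ E) (hE' : Differentiable ℝ (deriv E))
    (hΛE : ∀ s ≠ 0, dunklOp μ E s = x * E s) :
    dunklOp μ (dunklOp μ (fun s => Q s * E s)) t =
      x ^ 2 * Q t * E t + x * deriv Q t * (E t - E (-t)) + E t * dunklOp μ (dunklOp μ Q) t +
        (E (-t) - E t) * deriv (dunklOp μ Q) t + x * (E t + E (-t)) * deriv Q t +
        (E (-t) - E t) * dunklOp μ (deriv Q) t + 2 * (E t - E (-t)) * deriv (deriv Q) t := by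
  have hE₁ : ∀ s ≠ 0, deriv E s = x * E s - μ * (E s - E (-s)) / s := by
    intro s hs
    rw [← hΛE s hs, dunklOp]
    ring
  have hE₂ : deriv (deriv E) t =
      x * deriv E t - μ * ((deriv E t + deriv E (-t)) * t - (E t - E (-t))) / t ^ 2 := by
    have h : HasDerivAt (fun s => x * E s - μ * ((E s - E (-s)) / s)) _ t :=
      ((hE t).hasDerivAt.const_mul x).sub
        ((hasDerivAt_sub_comp_neg_div ht (hE t) (hE (-t))).const_mul μ)
    rw [Filter.EventuallyEq.deriv_eq (f := fun s => x * E s - μ * ((E s - E (-s)) / s)), h.deriv]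
    · ring
    · filter_upwards [compl_singleton_mem_nhds ht] with s hs
      rw [hE₁ s hs, mul_div_assoc]
  have hP' : deriv (fun s => Q s * E s) = fun s => deriv Q s * E s + Q s * deriv E s :=
    funext fun s => deriv_mul (hQ s) (hE s)
  have hP'' : deriv (deriv (fun s => Q s * E s)) t =
      deriv (deriv Q) t * E t + 2 * deriv Q t * deriv E t + Q t * deriv (deriv E) t := by
    have h : HasDerivAt (fun s => deriv Q s * E s + Q s * deriv E s) _ t :=
      ((hQ' t).hasDerivAt.mul (hE t).hasDerivAt).add ((hQ t).hasDerivAt.mul (hE' t).hasDerivAt)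
    rw [hP', h.deriv]
    ring
  have hP : Differentiable ℝ (fun s => Q s * E s) := hQ.mul hE
  have hPd : Differentiable ℝ (deriv (fun s => Q s * E s)) := by
    rw [hP']
    exact (hQ'.mul hE).add (hQ.mul hE')
  rw [dunklOp.eq_1 μ (dunklOp μ _), (hasDerivAt_dunklOp μ ht hP (hPd t)).deriv,
    dunklOp.eq_1 μ (dunklOp μ Q), (hasDerivAt_dunklOp μ ht hQ (hQ' t)).deriv, hP'', hE₂]
  simp only [dunklOp, hP', neg_neg, hE₁ t ht, hE₁ (-t) (neg_ne_zero.mpr ht)]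
  field_simp
  ring

theorem thetaFn_eq_zero_or_eq_one (i : ℕ) : thetaFn i = 0 ∨ thetaFn i = 1 := by
  unfold thetaFn; split <;> simp

theorem abs_thetaFn_le_one (i : ℕ) : |thetaFn i| ≤ 1 := by
  rcases thetaFn_eq_zero_or_eq_one i with h | h <;> simp [h]

noncomputable def dunklNum (μ : ℝ) (i : ℕ) : ℝ := i + 2 * μ * thetaFn i

theorem lt_dunklNum_succ {μ : ℝ} (hμ : μ + 1 / 2 > 0) (i : ℕ) : (i : ℝ) < dunklNum μ (i + 1) := by
  rw [dunklNum, Nat.cast_succ]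
  rcases thetaFn_eq_zero_or_eq_one (i + 1) with h | h <;> rw [h] <;> linarith

theorem gammaMu_succ {μ : ℝ} (hμ : μ + 1 / 2 > 0) (i : ℕ) :
    gammaMu μ (i + 1) = gammaMu μ i * dunklNum μ (i + 1) := by
  rcases Nat.even_or_odd' i with ⟨m, rfl | rfl⟩
  · have hodd : ¬Even (2 * m + 1) := Nat.not_even_iff_odd.mpr (odd_two_mul_add_one m)
    have hm : 0 < (m : ℝ) + μ + 1 / 2 := by linarith [(Nat.cast_nonneg m : (0 : ℝ) ≤ m)]
    rw [gammaMu, gammaMu, dunklNum, thetaFn, if_neg hodd, if_neg hodd, if_pos (even_two_mul m),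
      show (2 * m + 1) / 2 = m by omega, show 2 * m / 2 = m by omega,
      show (m : ℝ) + μ + 3 / 2 = (m + μ + 1 / 2) + 1 by ring, Real.Gamma_add_one hm.ne']
    push_cast
    ring
  · have hodd : ¬Even (2 * m + 1) := Nat.not_even_iff_odd.mpr (odd_two_mul_add_one m)
    have heven : Even (2 * m + 1 + 1) := ⟨m + 1, by ring⟩
    rw [gammaMu, gammaMu, dunklNum, thetaFn, if_pos heven, if_pos heven, if_neg hodd,
      show (2 * m + 1 + 1) / 2 = m + 1 by omega, show (2 * m + 1) / 2 = m by omega,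
      Nat.factorial_succ, show ((m + 1 : ℕ) : ℝ) + μ + 1 / 2 = m + μ + 3 / 2 by push_cast; ring]
    push_cast
    ring

theorem gammaMu_pos {μ : ℝ} (hμ : μ + 1 / 2 > 0) : ∀ i, 0 < gammaMu μ i
  | 0 => by simpa [gammaMu] using div_pos (Real.Gamma_pos_of_pos hμ) (Real.Gamma_pos_of_pos hμ)
  | i + 1 => by
    rw [gammaMu_succ hμ]
    exact mul_pos (gammaMu_pos hμ i) ((Nat.cast_nonneg i).trans_lt (lt_dunklNum_succ hμ i))

noncomputable def powSeries (a : ℕ → ℝ) (t : ℝ) : ℝ := ∑' i, a i * t ^ i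

def EntireCoeffs (a : ℕ → ℝ) : Prop := ∀ r : ℝ, Summable fun i => ‖a i * r ^ i‖

noncomputable def derivCoeffs (a : ℕ → ℝ) (i : ℕ) : ℝ := a (i + 1) * ((i : ℝ) + 1)

noncomputable def oddQuotientCoeffs (a : ℕ → ℝ) (i : ℕ) : ℝ := 2 * thetaFn (i + 1) * a (i + 1)

noncomputable def dunklCoeffs (μ : ℝ) (a : ℕ → ℝ) (i : ℕ) : ℝ := a (i + 1) * dunklNum μ (i + 1)

noncomputable def cauchyCoeffs (a b : ℕ → ℝ) (n : ℕ) : ℝ := ∑ j ∈ range (n + 1), a j * b (n - j)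

theorem cauchyCoeffs_mul_pow (a b : ℕ → ℝ) (n : ℕ) (s : ℝ) :
    ∑ k ∈ range (n + 1), a k * s ^ k * (b (n - k) * s ^ (n - k)) = cauchyCoeffs a b n * s ^ n := by
  rw [cauchyCoeffs, sum_mul]
  refine sum_congr rfl fun k hk => ?_
  rw [← pow_sub_mul_pow s (Nat.le_of_lt_succ (mem_range.mp hk))]
  ring

namespace EntireCoeffs

variable {a b : ℕ → ℝ}

theorem summable (ha : EntireCoeffs a) (t : ℝ) : Summable fun i => a i * t ^ i :=
  (ha t).of_norm

theorem of_abs_le {C : ℝ} (hb : EntireCoeffs b) (hab : ∀ i, |a i| ≤ C * |b i|) :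
    EntireCoeffs a := fun r =>
  .of_nonneg_of_le (fun _ => norm_nonneg _)
    (fun i => by
      simpa only [Real.norm_eq_abs, abs_mul, mul_assoc] using
        mul_le_mul_of_nonneg_right (hab i) (abs_nonneg (r ^ i)))
    ((hb r).mul_left C)

theorem derivCoeffs (ha : EntireCoeffs a) : EntireCoeffs (derivCoeffs a) := by
  intro r
  set R := |r| + 1
  have hR : 1 ≤ R := le_add_of_nonneg_left (abs_nonneg r)
  -- the shifted series at `2R` dominates, as `(i + 1) |r| ^ i ≤ (2R) ^ (i + 1)`
  have hpow (i : ℕ) : ((i : ℝ) + 1) * |r| ^ i ≤ (2 * R) ^ (i + 1) := by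
    rw [mul_pow]
    have hi : ((i : ℝ) + 1) ≤ 2 ^ (i + 1) := by exact_mod_cast (Nat.lt_two_pow_self).le
    have hr : |r| ^ i ≤ R ^ (i + 1) :=
      (pow_le_pow_left₀ (abs_nonneg r) (le_add_of_nonneg_right zero_le_one) i).trans
        (pow_le_pow_right₀ hR i.le_succ)
    exact mul_le_mul hi hr (by positivity) (by positivity)
  refine .of_nonneg_of_le (fun _ => norm_nonneg _) (fun i => ?_)
    ((summable_nat_add_iff 1).mpr (ha (2 * R)))
  have h2R : 0 ≤ 2 * R := by positivity
  simp only [_root_.derivCoeffs, Real.norm_eq_abs, abs_mul, abs_pow, abs_of_nonneg h2R,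
    abs_of_nonneg (by positivity : (0 : ℝ) ≤ (i : ℝ) + 1), mul_assoc]
  exact mul_le_mul_of_nonneg_left (hpow i) (abs_nonneg _)

theorem oddQuotientCoeffs (ha : EntireCoeffs a) : EntireCoeffs (oddQuotientCoeffs a) :=
  ha.derivCoeffs.of_abs_le (C := 2) fun i => by
    have hθ := abs_thetaFn_le_one (i + 1)
    have hi : (0 : ℝ) ≤ i := Nat.cast_nonneg i
    rw [_root_.oddQuotientCoeffs, _root_.derivCoeffs, abs_mul, abs_mul, abs_mul, abs_two,
      abs_of_nonneg (by positivity : (0 : ℝ) ≤ (i : ℝ) + 1)]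
    nlinarith [abs_nonneg (a (i + 1)), abs_nonneg (thetaFn (i + 1))]

theorem dunklCoeffs (ha : EntireCoeffs a) (μ : ℝ) : EntireCoeffs (dunklCoeffs μ a) := by
  refine ha.derivCoeffs.of_abs_le (C := 1 + 2 * |μ|) fun i => ?_
  have hi : (0 : ℝ) ≤ (i : ℝ) + 1 := by positivity
  have hθ : |2 * μ * thetaFn (i + 1)| ≤ 2 * |μ| * ((i : ℝ) + 1) := by
    rw [abs_mul, abs_mul, abs_two]
    nlinarith [abs_thetaFn_le_one (i + 1), abs_nonneg μ, abs_nonneg (thetaFn (i + 1))]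
  have hnum : |dunklNum μ (i + 1)| ≤ (1 + 2 * |μ|) * ((i : ℝ) + 1) := by
    rw [dunklNum, Nat.cast_succ]
    linarith [abs_add_le ((i : ℝ) + 1) (2 * μ * thetaFn (i + 1)), abs_of_nonneg hi]
  rw [_root_.dunklCoeffs, _root_.derivCoeffs, abs_mul, abs_mul, abs_of_nonneg hi]
  nlinarith [abs_nonneg (a (i + 1))]

theorem cauchyCoeffs (ha : EntireCoeffs a) (hb : EntireCoeffs b) :
    EntireCoeffs (cauchyCoeffs a b) := fun r =>
  (summable_norm_sum_mul_range_of_summable_norm (ha r) (hb r)).congr fun n => by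
    rw [cauchyCoeffs_mul_pow]

theorem hasDerivAt_powSeries (ha : EntireCoeffs a) (t : ℝ) :
    HasDerivAt (powSeries a) (powSeries (_root_.derivCoeffs a) t) t := by
  set R := |t| + 1
  have hR : 0 < R := by positivity
  have htR : t ∈ Metric.ball (0 : ℝ) R := by simp [R]
  have hsummable_bound : Summable fun n : ℕ => |a n| * (n * R ^ (n - 1)) := by
    refine (summable_nat_add_iff 1).mp ((ha.derivCoeffs R).congr fun n => ?_)
    simp only [_root_.derivCoeffs, Real.norm_eq_abs, abs_mul, abs_pow, abs_of_pos hR,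
      Nat.add_sub_cancel, Nat.cast_succ, abs_of_nonneg (by positivity : (0 : ℝ) ≤ (n : ℝ) + 1)]
    ring
  have hderiv_le_bound (n : ℕ) (s : ℝ) (hs : s ∈ Metric.ball (0 : ℝ) R) :
      ‖a n * (n * s ^ (n - 1))‖ ≤ |a n| * (n * R ^ (n - 1)) := by
    rw [mem_ball_zero_iff, Real.norm_eq_abs] at hs
    simp only [Real.norm_eq_abs, abs_mul, abs_pow, Nat.abs_cast]
    gcongr
  have h := hasDerivAt_tsum_of_isPreconnected hsummable_bound Metric.isOpen_ball
    (convex_ball (0 : ℝ) R).isPreconnected (g := fun n s => a n * s ^ n)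
    (fun n s _ => (hasDerivAt_pow n s).const_mul (a n)) hderiv_le_bound (Metric.mem_ball_self hR)
    (ha.summable 0) htR
  have hshift : Summable fun n : ℕ => a n * (n * t ^ (n - 1)) :=
    (summable_nat_add_iff 1).mp ((ha.derivCoeffs.summable t).congr fun n => by
      simp only [_root_.derivCoeffs, Nat.add_sub_cancel, Nat.cast_succ]
      ring)
  have hval : ∑' n : ℕ, a n * (n * t ^ (n - 1)) = powSeries (_root_.derivCoeffs a) t := by
    rw [hshift.tsum_eq_zero_add]
    simp only [powSeries, _root_.derivCoeffs, CharP.cast_eq_zero, zero_mul, mul_zero, zero_add,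
      Nat.add_sub_cancel, Nat.cast_succ]
    exact tsum_congr fun n => by ring
  rwa [hval] at h

theorem differentiable_powSeries (ha : EntireCoeffs a) : Differentiable ℝ (powSeries a) :=
  fun t => (ha.hasDerivAt_powSeries t).differentiableAt

theorem deriv_powSeries (ha : EntireCoeffs a) :
    deriv (powSeries a) = powSeries (_root_.derivCoeffs a) :=
  funext fun t => (ha.hasDerivAt_powSeries t).deriv

theorem differentiable_deriv_powSeries (ha : EntireCoeffs a) :
    Differentiable ℝ (deriv (powSeries a)) := by
  rw [ha.deriv_powSeries]
  exact ha.derivCoeffs.differentiable_powSeries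

end EntireCoeffs

theorem powSeries_mul {a b : ℕ → ℝ} (ha : EntireCoeffs a) (hb : EntireCoeffs b) (s : ℝ) :
    powSeries a s * powSeries b s = powSeries (cauchyCoeffs a b) s := by
  rw [powSeries, powSeries, powSeries,
    tsum_mul_tsum_eq_tsum_sum_range_of_summable_norm (ha s) (hb s)]
  exact tsum_congr fun n => cauchyCoeffs_mul_pow a b n s

theorem powSeries_sub_powSeries_neg {a : ℕ → ℝ} (ha : EntireCoeffs a) (s : ℝ) :
    powSeries a s - powSeries a (-s) = s * powSeries (oddQuotientCoeffs a) s := by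
  have hterm (i : ℕ) : a i * s ^ i - a i * (-s) ^ i = 2 * thetaFn i * a i * s ^ i := by
    rcases Nat.even_or_odd i with hi | hi
    · rw [hi.neg_pow, thetaFn, if_pos hi]; ring
    · rw [hi.neg_pow, thetaFn, if_neg (Nat.not_even_iff_odd.mpr hi)]; ring
  have hshift : Summable fun i => 2 * thetaFn (i + 1) * a (i + 1) * s ^ (i + 1) :=
    ((ha.oddQuotientCoeffs.summable s).mul_left s).congr fun i => by
      rw [oddQuotientCoeffs, pow_succ]; ring
  rw [powSeries, powSeries, ← (ha.summable s).tsum_sub (ha.summable (-s)), tsum_congr hterm,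
    tsum_eq_zero_add' (f := fun i => 2 * thetaFn i * a i * s ^ i) hshift, powSeries,
    ← tsum_mul_left]
  rw [show thetaFn 0 = 0 from if_pos Even.zero, mul_zero, zero_mul, zero_mul, zero_add]
  exact tsum_congr fun i => by rw [oddQuotientCoeffs, pow_succ]; ring

theorem dunklOp_powSeries (μ : ℝ) {a : ℕ → ℝ} (ha : EntireCoeffs a) {s : ℝ} (hs : s ≠ 0) :
    dunklOp μ (powSeries a) s = powSeries (dunklCoeffs μ a) s := by
  rw [dunklOp, ha.deriv_powSeries, powSeries_sub_powSeries_neg ha, mul_left_comm,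
    mul_div_cancel_left₀ _ hs, powSeries, powSeries, ← tsum_mul_left,
    ← (ha.derivCoeffs.summable s).tsum_add ((ha.oddQuotientCoeffs.summable s).mul_left μ)]
  refine tsum_congr fun i => ?_
  rw [derivCoeffs, oddQuotientCoeffs, dunklCoeffs, dunklNum, Nat.cast_succ]
  ring

theorem dunklOp_dunklOp_powSeries (μ : ℝ) {a : ℕ → ℝ} (ha : EntireCoeffs a) {t : ℝ} (ht : t ≠ 0) :
    dunklOp μ (dunklOp μ (powSeries a)) t = powSeries (dunklCoeffs μ (dunklCoeffs μ a)) t := by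
  rw [dunklOp_congr_of_ne_zero μ (fun s hs => dunklOp_powSeries μ ha hs) ht,
    dunklOp_powSeries μ (ha.dunklCoeffs μ) ht]

theorem entireCoeffs_dunklExp {μ : ℝ} (hμ : μ + 1 / 2 > 0) (x : ℝ) :
    EntireCoeffs fun i => x ^ i / gammaMu μ i := by
  intro r
  have hterm (i : ℕ) : ‖x ^ i / gammaMu μ i * r ^ i‖ = |x * r| ^ i / gammaMu μ i := by
    rw [Real.norm_eq_abs, abs_mul, abs_div, abs_of_pos (gammaMu_pos hμ i), abs_pow, abs_pow,
      abs_mul, mul_pow]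
    ring
  simp only [hterm]
  obtain ⟨N, hN⟩ := exists_nat_ge (2 * |x * r|)
  refine summable_of_ratio_norm_eventually_le (r := 1 / 2) (by norm_num) ?_
  filter_upwards [Filter.eventually_ge_atTop N] with i hi
  have hnum : 2 * |x * r| < dunklNum μ (i + 1) :=
    hN.trans_lt ((Nat.cast_le.mpr hi).trans_lt (lt_dunklNum_succ hμ i))
  have hγ := gammaMu_pos hμ i
  have hγ' := gammaMu_pos hμ (i + 1)
  rw [Real.norm_of_nonneg (by positivity), Real.norm_of_nonneg (by positivity), gammaMu_succ hμ,
    pow_succ, div_le_iff₀ (mul_pos hγ (by linarith [abs_nonneg (x * r)]))]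
  have h : 1 / 2 * (|x * r| ^ i / gammaMu μ i) * (gammaMu μ i * dunklNum μ (i + 1)) =
      |x * r| ^ i * (dunklNum μ (i + 1) / 2) := by
    field_simp
  rw [h]
  exact mul_le_mul_of_nonneg_left (by linarith) (by positivity)

theorem dunklExp_mul_eq_powSeries (μ x s : ℝ) :
    dunklExp μ (x * s) = powSeries (fun i => x ^ i / gammaMu μ i) s :=
  tsum_congr fun i => by rw [mul_pow, mul_div_right_comm]

theorem dunklOp_dunklExp_mul {μ : ℝ} (hμ : μ + 1 / 2 > 0) (x : ℝ) {s : ℝ} (hs : s ≠ 0) :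
    dunklOp μ (fun s => dunklExp μ (x * s)) s = x * dunklExp μ (x * s) := by
  have hcoeff :
      dunklCoeffs μ (fun i => x ^ i / gammaMu μ i) = fun i => x * (x ^ i / gammaMu μ i) := by
    funext i
    have hγ := (gammaMu_pos hμ i).ne'
    have hnum := ((Nat.cast_nonneg i).trans_lt (lt_dunklNum_succ hμ i)).ne'
    rw [dunklCoeffs, gammaMu_succ hμ, pow_succ]
    field_simp
  rw [funext (dunklExp_mul_eq_powSeries μ x), dunklOp_powSeries μ (entireCoeffs_dunklExp hμ x) hs,
    hcoeff, dunklExp_mul_eq_powSeries, powSeries, powSeries, ← tsum_mul_left]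
  exact tsum_congr fun i => by ring

theorem Qf_eq_powSeries (μ : ℝ) (c : ℕ → ℝ) : Qf μ c = powSeries fun i => c i / gammaMu μ i :=
  funext fun s => tsum_congr fun i => mul_div_right_comm (c i) (s ^ i) (gammaMu μ i)

theorem qPoly_div_gammaMu {μ : ℝ} (hμ : μ + 1 / 2 > 0) (c : ℕ → ℝ) (x : ℝ) (n : ℕ) :
    qPoly μ c n x / gammaMu μ n =
      cauchyCoeffs (fun i => x ^ i / gammaMu μ i) (fun i => c i / gammaMu μ i) n := by
  rw [qPoly, cauchyCoeffs, sum_div]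
  refine sum_congr rfl fun j _ => ?_
  have := (gammaMu_pos hμ n).ne'
  have := (gammaMu_pos hμ j).ne'
  have := (gammaMu_pos hμ (n - j)).ne'
  field_simp

theorem dunklAppell_second_identity_general (μ : ℝ) (hμ : μ + 1 / 2 > 0) (c : ℕ → ℝ)
    (hQ : ∀ t : ℝ, Summable fun i : ℕ => |c i * t ^ i / gammaMu μ i|)
    (x t : ℝ) (ht : t ≠ 0) :
    ∑' i : ℕ, qPoly μ c (i + 2) x / gammaMu μ (i + 2) *
        (((i : ℝ) + 2) + 2 * μ * thetaFn (i + 2)) *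
        (((i : ℝ) + 1) + 2 * μ * thetaFn (i + 1)) * t ^ i =
      x ^ 2 * Qf μ c t * dunklExp μ (x * t) +
        x * deriv (Qf μ c) t * (dunklExp μ (x * t) - dunklExp μ (-(x * t))) +
        dunklExp μ (x * t) * dunklOp μ (dunklOp μ (Qf μ c)) t +
        (dunklExp μ (-(x * t)) - dunklExp μ (x * t)) * deriv (dunklOp μ (Qf μ c)) t +
        x * (dunklExp μ (x * t) + dunklExp μ (-(x * t))) * deriv (Qf μ c) t +
        (dunklExp μ (-(x * t)) - dunklExp μ (x * t)) * dunklOp μ (deriv (Qf μ c)) t +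
        2 * (dunklExp μ (x * t) - dunklExp μ (-(x * t))) * deriv (deriv (Qf μ c)) t := by
  set b : ℕ → ℝ := fun i => c i / gammaMu μ i
  set e : ℕ → ℝ := fun i => x ^ i / gammaMu μ i
  have hb : EntireCoeffs b := fun r => (hQ r).congr fun i => by
    rw [Real.norm_eq_abs, mul_div_right_comm]
  have he : EntireCoeffs e := entireCoeffs_dunklExp hμ x
  have hQb : Qf μ c = powSeries b := Qf_eq_powSeries μ c
  have hEe : (fun s => dunklExp μ (x * s)) = powSeries e := funext (dunklExp_mul_eq_powSeries μ x)
  have hprod : (fun s => Qf μ c s * dunklExp μ (x * s)) = powSeries (cauchyCoeffs e b) :=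
    funext fun s => by rw [hQb, dunklExp_mul_eq_powSeries, mul_comm, powSeries_mul he hb]
  have hLHS : ∑' i : ℕ, qPoly μ c (i + 2) x / gammaMu μ (i + 2) *
      (((i : ℝ) + 2) + 2 * μ * thetaFn (i + 2)) * (((i : ℝ) + 1) + 2 * μ * thetaFn (i + 1)) * t ^ i
      = dunklOp μ (dunklOp μ fun s => Qf μ c s * dunklExp μ (x * s)) t := by
    rw [hprod, dunklOp_dunklOp_powSeries μ (he.cauchyCoeffs hb) ht]
    refine tsum_congr fun i => ?_
    rw [qPoly_div_gammaMu hμ, dunklCoeffs, dunklCoeffs, dunklNum, dunklNum]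
    push_cast
    ring
  rw [hLHS, ← mul_neg]
  refine dunklOp_dunklOp_mul_of_dunklOp_eq μ ht ?_ ?_ ?_ ?_ fun s hs => dunklOp_dunklExp_mul hμ x hs
  · rw [hQb]; exact hb.differentiable_powSeries
  · rw [hQb]; exact hb.differentiable_deriv_powSeries
  · rw [hEe]; exact he.differentiable_powSeries
  · rw [hEe]; exact he.differentiable_deriv_powSeries

/-- second derived identity for Dunkl–Appell polynomials. -/
theorem dunklAppell_second_identity (μ : ℝ) (hμ : μ + 1 / 2 > 0) (c : ℕ → ℝ) (hc0 : c 0 ≠ 0)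
    (hQ : ∀ t : ℝ, Summable fun i : ℕ => |c i * t ^ i / gammaMu μ i|)
    (x t : ℝ) (ht : t ≠ 0) :
    ∑' i : ℕ, qPoly μ c (i + 2) x / gammaMu μ (i + 2) *
        (((i : ℝ) + 2) + 2 * μ * thetaFn (i + 2)) *
        (((i : ℝ) + 1) + 2 * μ * thetaFn (i + 1)) * t ^ i =
      x ^ 2 * Qf μ c t * dunklExp μ (x * t) +
        x * deriv (Qf μ c) t * (dunklExp μ (x * t) - dunklExp μ (-(x * t))) +
        dunklExp μ (x * t) * dunklOp μ (dunklOp μ (Qf μ c)) t +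
        (dunklExp μ (-(x * t)) - dunklExp μ (x * t)) * deriv (dunklOp μ (Qf μ c)) t +
        x * (dunklExp μ (x * t) + dunklExp μ (-(x * t))) * deriv (Qf μ c) t +
        (dunklExp μ (-(x * t)) - dunklExp μ (x * t)) * dunklOp μ (deriv (Qf μ c)) t +
        2 * (dunklExp μ (x * t) - dunklExp μ (-(x * t))) * deriv (deriv (Qf μ c)) t :=
  dunklAppell_second_identity_general μ hμ c hQ x t ht
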